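/- Let e0, e1 be the standard basis of ℂ², ψ⁻ = (1/√2)(e0⊗e1 − e1⊗e0) ∈ ℂ⁴, P = |ψ⁻⟩⟨ψ⁻|, and let S be the partial transpose of P on the second qubit, defined by S((i,j),(k,l)) = P((i,l),(k,j)). Then S yields nonnegative values on all pure tensors: for all u, v ∈ ℂ², the inner product ⟨u⊗v, S·(u⊗v)⟩ is a nonnegative real number. -/
import Mathlib


open Matrix

noncomputable section

/-- The outer product `|u⟩⟨v|` of two vectors. -/
def outer {ι : Type*} (u v : ι → ℂ) : Matrix ι ι ℂ :=
  Matrix.of fun i j => u i * star (v j)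

/-- The tensor (Kronecker) product of two qubit vectors. -/
def tens (u v : Fin 2 → ℂ) : Fin 2 × Fin 2 → ℂ := fun p => u p.1 * v p.2

def e0 : Fin 2 → ℂ := ![1, 0]
def e1 : Fin 2 → ℂ := ![0, 1]

/-- The singlet vector `ψ⁻ = (1/√2)(e0⊗e1 − e1⊗e0)`. -/
def psiMinus : Fin 2 × Fin 2 → ℂ :=
  ((Real.sqrt 2 : ℂ))⁻¹ • (tens e0 e1 - tens e1 e0)

/-- The singlet projector `P = |ψ⁻⟩⟨ψ⁻|`. -/
def P : Matrix (Fin 2 × Fin 2) (Fin 2 × Fin 2) ℂ := outer psiMinus psiMinus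

/-- The partial transpose of `P` on the second qubit:
`S((i,j),(k,l)) = P((i,l),(k,j))`. -/
def S : Matrix (Fin 2 × Fin 2) (Fin 2 × Fin 2) ℂ :=
  Matrix.of fun p q => P (p.1, q.2) (q.1, p.2)

theorem partial_transpose_of_singlet_is_POPT (u v : Fin 2 → ℂ) :
    (0 ≤ (star (tens u v) ⬝ᵥ S.mulVec (tens u v)).re) ∧
    (star (tens u v) ⬝ᵥ S.mulVec (tens u v)).im = 0 := by
  have key : star (tens u v) ⬝ᵥ S.mulVec (tens u v) =
      ((Real.sqrt 2 : ℂ))⁻¹ * ((Real.sqrt 2 : ℂ))⁻¹ *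
        Complex.normSq (starRingEnd ℂ (u 0) * v 1 - starRingEnd ℂ (u 1) * v 0) := by
    rw [show ((Complex.normSq ((starRingEnd ℂ) (u 0) * v 1 - (starRingEnd ℂ) (u 1) * v 0) : ℝ) : ℂ) = ((starRingEnd ℂ) (u 0) * v 1 - (starRingEnd ℂ) (u 1) * v 0) * starRingEnd ℂ ((starRingEnd ℂ) (u 0) * v 1 - (starRingEnd ℂ) (u 1) * v 0) from (Complex.mul_conj _).symm]
    simp only [S, P, outer, psiMinus, tens, e0, e1, dotProduct, Matrix.mulVec,
      Matrix.of_apply, Fintype.sum_prod_type, Fin.sum_univ_succ, Finset.sum_empty,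
      Fin.sum_univ_zero, Pi.star_apply, Pi.smul_apply, Pi.sub_apply, smul_eq_mul,
      Matrix.cons_val_zero, Matrix.cons_val_one, Matrix.head_cons, map_sub, _root_.map_mul,
      map_inv₀, Complex.conj_ofReal, RingHom.id_apply, starRingEnd_apply]
    ring_nf
    simp [Complex.conj_conj, ← starRingEnd_apply]
    ring
  set A := (starRingEnd ℂ) (u 0) * v 1 - (starRingEnd ℂ) (u 1) * v 0 with hA
  have h2 : ((Real.sqrt 2 : ℂ))⁻¹ * ((Real.sqrt 2 : ℂ))⁻¹ * (Complex.normSq A : ℂ)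
      = ((2⁻¹ * Complex.normSq A : ℝ) : ℂ) := by
    rw [← mul_inv, ← Complex.ofReal_mul, Real.mul_self_sqrt (by norm_num)]
    push_cast
    ring
  rw [key, h2]
  constructor
  · rw [Complex.ofReal_re]
    have := Complex.normSq_nonneg A
    nlinarith
  · rw [Complex.ofReal_im]
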